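/- Let m ≥ 2 and m ≥ t ≥ s ≥ 0 be integers with m ≥ t + s, and set λ = (m, t, s, 0) and μ = (m, m−s, m−t, 0). Then the Littlewood–Richardson coefficient c^{(m+2,m,m,m−2)}_{λ,μ} is at least 1. -/
import Mathlib


/-- A length-4 partition `(a, b, c, d)` as a row-length function: row `i`
(for `0 ≤ i ≤ 3`) has length the `i`-th entry, and all other rows are empty. -/
def part4 (a b c d : ℕ) : ℕ → ℕ
  | 0 => a
  | 1 => b
  | 2 => c
  | 3 => d
  | _ => 0

/-- The content function of the length-4 partition `(a, b, c, d)`: the entry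
`1` must occur `a` times, the entry `2` must occur `b` times, the entry `3`
must occur `c` times, the entry `4` must occur `d` times, and every other
entry must not occur. -/
def content4 (a b c d : ℕ) : ℕ → ℕ
  | 1 => a
  | 2 => b
  | 3 => c
  | 4 => d
  | _ => 0

/-- The cell `(i, j)` (row `i`, column `j`) lies in the skew diagram `ν / λ`,
i.e. it is a cell of `ν` but not of `λ`. -/
def IsSkewCell (ν lam : ℕ → ℕ) (i j : ℕ) : Prop :=
  lam i ≤ j ∧ j < ν i

instance (ν lam : ℕ → ℕ) (i j : ℕ) : Decidable (IsSkewCell ν lam i j) :=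
  inferInstanceAs (Decidable (_ ∧ _))

/-- A bound on the column indices of cells of `ν` (for `ν` a length-4
partition all of whose rows have length at most this number). -/
def colBound (ν : ℕ → ℕ) : ℕ := ν 0 + ν 1 + ν 2 + ν 3

/-- The number of cells of the skew diagram `ν / λ` carrying entry `e` in the
filling `T` and lying in the prefix of the reverse reading word determined by
`(r, c)`: the cells in rows before row `r`, together with the cells of row `r`
in columns `≥ c` (rows are read from top to bottom, each row from right to
left, so these sets are exactly the prefixes of the reverse reading word). -/
def prefixCount (ν lam : ℕ → ℕ) (T : ℕ → ℕ → ℕ) (r c e : ℕ) : ℕ :=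
  ((Finset.range 4 ×ˢ Finset.range (colBound ν)).filter
    (fun p => IsSkewCell ν lam p.1 p.2 ∧ T p.1 p.2 = e ∧
      (p.1 < r ∨ (p.1 = r ∧ c ≤ p.2)))).card

/-- The total number of cells of the skew diagram `ν / λ` carrying entry `e`
in the filling `T`. -/
def entryCount (ν lam : ℕ → ℕ) (T : ℕ → ℕ → ℕ) (e : ℕ) : ℕ :=
  ((Finset.range 4 ×ˢ Finset.range (colBound ν)).filter
    (fun p => IsSkewCell ν lam p.1 p.2 ∧ T p.1 p.2 = e)).card

/-- `T` is a Littlewood–Richardson tableau of shape `ν / λ` and content `μ`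
(where `μ` is given as a content function, e.g. `content4 a b c d`):
a filling of the cells of `ν` not in `λ` by positive integers, weakly
increasing along each row, strictly increasing down each column, in which each
entry `e ≥ 1` occurs exactly `μ e` times and every prefix of the reverse
reading word contains at least as many `e`'s as `(e+1)`'s for every `e ≥ 1`.
The filling is normalised to be `0` outside the skew diagram. -/
structure IsLRTableau (ν lam μ : ℕ → ℕ) (T : ℕ → ℕ → ℕ) : Prop where
  zero_off : ∀ i j, ¬ IsSkewCell ν lam i j → T i j = 0
  pos : ∀ i j, IsSkewCell ν lam i j → 1 ≤ T i j
  row_weak : ∀ i j j', IsSkewCell ν lam i j → IsSkewCell ν lam i j' → j ≤ j' →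
    T i j ≤ T i j'
  col_strict : ∀ i i' j, IsSkewCell ν lam i j → IsSkewCell ν lam i' j → i < i' →
    T i j < T i' j
  content : ∀ e, 1 ≤ e → entryCount ν lam T e = μ e
  lattice : ∀ r c e, 1 ≤ e → prefixCount ν lam T r c (e + 1) ≤ prefixCount ν lam T r c e

/-- The Littlewood–Richardson coefficient `c^ν_{λ, μ}`: the number of
Littlewood–Richardson tableaux of shape `ν / λ` and content `μ`. -/
noncomputable def lrCoeff (ν lam μ : ℕ → ℕ) : ℕ :=
  Nat.card {T : ℕ → ℕ → ℕ // IsLRTableau ν lam μ T}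

set_option maxHeartbeats 1000000

-- ##### aux #####

lemma rowcard (N lo hi : ℕ) (P : ℕ → Prop) [DecidablePred P] (hhi : hi ≤ N)
    (h : ∀ j, j < N → (P j ↔ lo ≤ j ∧ j < hi)) :
    ((Finset.range N).filter P).card = hi - lo := by
  have : (Finset.range N).filter P = Finset.Ico lo hi := by
    ext j
    simp only [Finset.mem_filter, Finset.mem_range, Finset.mem_Ico]
    constructor
    · rintro ⟨hj, hp⟩; exact (h j hj).1 hp
    · rintro ⟨h1, h2⟩
      have hj : j < N := lt_of_lt_of_le h2 hhi
      exact ⟨hj, (h j hj).2 ⟨h1, h2⟩⟩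
  rw [this, Nat.card_Ico]

lemma rowsum (N lo hi : ℕ) (P : ℕ → Prop) [DecidablePred P] (hhi : hi ≤ N)
    (h : ∀ j, j < N → (P j ↔ lo ≤ j ∧ j < hi)) :
    (∑ j ∈ Finset.range N, if P j then 1 else 0) = hi - lo := by
  rw [← Finset.card_filter]; exact rowcard N lo hi P hhi h

lemma rowsum' (N lo hi i r c : ℕ) (P : ℕ → Prop) [DecidablePred P] (hhi : hi ≤ N)
    (h : ∀ j, j < N → (P j ↔ lo ≤ j ∧ j < hi ∧ (i < r ∨ (i = r ∧ c ≤ j)))) :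
    (∑ j ∈ Finset.range N, if P j then 1 else 0) =
      if i < r then hi - lo else if i = r then hi - max lo c else 0 := by
  split_ifs with h1 h2
  · refine rowsum N lo hi P hhi (fun j hj => ?_)
    rw [h j hj]
    constructor
    · rintro ⟨a1, a2, _⟩; exact ⟨a1, a2⟩
    · rintro ⟨a1, a2⟩; exact ⟨a1, a2, Or.inl h1⟩
  · refine rowsum N (max lo c) hi P hhi (fun j hj => ?_)
    rw [h j hj]; omega
  · rw [← Finset.card_filter, Finset.card_eq_zero, Finset.filter_eq_empty_iff]
    intro j hj
    rw [h j (Finset.mem_range.mp hj)]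
    omega

lemma entryCount_eq (ν lam : ℕ → ℕ) (T : ℕ → ℕ → ℕ) (e : ℕ)
    (l0 h0 l1 h1 l2 h2 l3 h3 : ℕ)
    (hb0 : h0 ≤ colBound ν) (hb1 : h1 ≤ colBound ν)
    (hb2 : h2 ≤ colBound ν) (hb3 : h3 ≤ colBound ν)
    (hp0 : ∀ j, j < colBound ν → ((IsSkewCell ν lam 0 j ∧ T 0 j = e) ↔ (l0 ≤ j ∧ j < h0)))
    (hp1 : ∀ j, j < colBound ν → ((IsSkewCell ν lam 1 j ∧ T 1 j = e) ↔ (l1 ≤ j ∧ j < h1)))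
    (hp2 : ∀ j, j < colBound ν → ((IsSkewCell ν lam 2 j ∧ T 2 j = e) ↔ (l2 ≤ j ∧ j < h2)))
    (hp3 : ∀ j, j < colBound ν → ((IsSkewCell ν lam 3 j ∧ T 3 j = e) ↔ (l3 ≤ j ∧ j < h3))) :
    entryCount ν lam T e = (h0 - l0) + (h1 - l1) + (h2 - l2) + (h3 - l3) := by
  unfold entryCount
  rw [Finset.card_filter, Finset.sum_product]
  rw [Finset.sum_range_succ, Finset.sum_range_succ, Finset.sum_range_succ,
    Finset.sum_range_succ, Finset.sum_range_zero, zero_add]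
  rw [rowsum _ l0 h0 _ hb0 hp0, rowsum _ l1 h1 _ hb1 hp1,
    rowsum _ l2 h2 _ hb2 hp2, rowsum _ l3 h3 _ hb3 hp3]

lemma prefixCount_eq (ν lam : ℕ → ℕ) (T : ℕ → ℕ → ℕ) (r c e : ℕ)
    (l0 h0 l1 h1 l2 h2 l3 h3 : ℕ)
    (hb0 : h0 ≤ colBound ν) (hb1 : h1 ≤ colBound ν)
    (hb2 : h2 ≤ colBound ν) (hb3 : h3 ≤ colBound ν)
    (hp0 : ∀ j, j < colBound ν → ((IsSkewCell ν lam 0 j ∧ T 0 j = e) ↔ (l0 ≤ j ∧ j < h0)))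
    (hp1 : ∀ j, j < colBound ν → ((IsSkewCell ν lam 1 j ∧ T 1 j = e) ↔ (l1 ≤ j ∧ j < h1)))
    (hp2 : ∀ j, j < colBound ν → ((IsSkewCell ν lam 2 j ∧ T 2 j = e) ↔ (l2 ≤ j ∧ j < h2)))
    (hp3 : ∀ j, j < colBound ν → ((IsSkewCell ν lam 3 j ∧ T 3 j = e) ↔ (l3 ≤ j ∧ j < h3))) :
    prefixCount ν lam T r c e =
      (if 0 < r then h0 - l0 else if 0 = r then h0 - max l0 c else 0) +
      (if 1 < r then h1 - l1 else if 1 = r then h1 - max l1 c else 0) +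
      (if 2 < r then h2 - l2 else if 2 = r then h2 - max l2 c else 0) +
      (if 3 < r then h3 - l3 else if 3 = r then h3 - max l3 c else 0) := by
  unfold prefixCount
  rw [Finset.card_filter, Finset.sum_product]
  rw [Finset.sum_range_succ, Finset.sum_range_succ, Finset.sum_range_succ,
    Finset.sum_range_succ, Finset.sum_range_zero, zero_add]
  rw [rowsum' _ l0 h0 0 r c _ hb0 (fun j hj => by have := hp0 j hj; tauto),
    rowsum' _ l1 h1 1 r c _ hb1 (fun j hj => by have := hp1 j hj; tauto),
    rowsum' _ l2 h2 2 r c _ hb2 (fun j hj => by have := hp2 j hj; tauto),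
    rowsum' _ l3 h3 3 r c _ hb3 (fun j hj => by have := hp3 j hj; tauto)]

/-- The explicit LR tableau used as witness. -/
def LRTab (m t s : ℕ) : ℕ → ℕ → ℕ
  | 0, j => if m ≤ j ∧ j < m + 2 then 1 else 0
  | 1, j => if t ≤ j ∧ j < m then (if j + max t 2 < m + t then 1 else 2) else 0
  | 2, j => if s ≤ j ∧ j < m then
      (if j + max s 2 < s + max t 2 then 1 else if j + max t 2 < m + t then 2 else 3) else 0
  | 3, j => if j < m - 2 then
      (if j + 2 < max s 2 then 1 else if j + 2 < max t 2 then 2 else 3) else 0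
  | _, _ => 0

lemma LRTab_le3 (m t s : ℕ) : ∀ i j, LRTab m t s i j ≤ 3 := by
  intro i j
  rcases i with _ | _ | _ | _ | i <;> simp only [LRTab] <;>
    first | (split_ifs <;> omega) | omega

lemma content4_ge4 (a b c e : ℕ) (he : 4 ≤ e) : content4 a b c 0 e = 0 := by
  rcases e with _ | _ | _ | _ | _ | e
  · omega
  · omega
  · omega
  · omega
  · rfl
  · rfl

lemma entryCount_ge4 (ν lam : ℕ → ℕ) (T : ℕ → ℕ → ℕ) (e : ℕ)
    (hT : ∀ i j, T i j ≤ 3) (he : 4 ≤ e) : entryCount ν lam T e = 0 := by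
  unfold entryCount
  rw [Finset.card_eq_zero, Finset.filter_eq_empty_iff]
  rintro p _ ⟨_, h2⟩
  have := hT p.1 p.2
  omega

lemma prefixCount_ge4 (ν lam : ℕ → ℕ) (T : ℕ → ℕ → ℕ) (r c e : ℕ)
    (hT : ∀ i j, T i j ≤ 3) (he : 4 ≤ e) : prefixCount ν lam T r c e = 0 := by
  unfold prefixCount
  rw [Finset.card_eq_zero, Finset.filter_eq_empty_iff]
  rintro p _ ⟨_, h2, _⟩
  have := hT p.1 p.2
  omega


theorem lrCoeff_nu_m2_pos' (m t s : ℕ) (hm : 2 ≤ m) (hts : s ≤ t) (htm : t ≤ m)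
    (hsum : t + s ≤ m) :
    IsLRTableau (part4 (m + 2) m m (m - 2)) (part4 m t s 0)
        (content4 m (m - s) (m - t) 0) (LRTab m t s) := by
  constructor
  · -- zero_off
    intro i j h
    rcases i with _ | _ | _ | _ | i <;>
      simp only [IsSkewCell, part4, LRTab, not_and, not_lt] at h ⊢ <;>
      split_ifs <;> first | rfl | omega
  · -- pos
    intro i j h
    rcases i with _ | _ | _ | _ | i <;>
      simp only [IsSkewCell, part4, LRTab] at h ⊢ <;>
      first | (split_ifs <;> omega) | omega
  · -- row_weak
    intro i j j' h h' hjj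
    rcases i with _ | _ | _ | _ | i <;>
      simp only [IsSkewCell, part4, LRTab] at h h' ⊢ <;>
      first | (split_ifs <;> omega) | omega
  · -- col_strict
    intro i i' j h h' hii
    rcases i with _ | _ | _ | _ | i <;> rcases i' with _ | _ | _ | _ | i' <;>
      simp only [IsSkewCell, part4, LRTab] at h h' ⊢ <;>
      first | (split_ifs <;> omega) | omega
  · -- content
    intro e he
    rcases e with _ | _ | _ | _ | e
    · omega
    · rw [entryCount_eq _ _ _ _ m (m + 2) t (m + t - max t 2) s (s + max t 2 - max s 2)
        0 (max s 2 - 2)] <;>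
        first
          | (simp only [colBound, part4]; omega)
          | (intro j hj; simp only [IsSkewCell, part4, LRTab]; split_ifs <;> omega)
          | (simp only [content4]; omega)
    · rw [entryCount_eq _ _ _ _ 0 0 (m + t - max t 2) m (s + max t 2 - max s 2)
        (m + t - max t 2) (max s 2 - 2) (max t 2 - 2)] <;>
        first
          | (simp only [colBound, part4]; omega)
          | (intro j hj; simp only [IsSkewCell, part4, LRTab]; split_ifs <;> omega)
          | (simp only [content4]; omega)
    · rw [entryCount_eq _ _ _ _ 0 0 0 0 (m + t - max t 2) m (max t 2 - 2) (m - 2)] <;>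
        first
          | (simp only [colBound, part4]; omega)
          | (intro j hj; simp only [IsSkewCell, part4, LRTab]; split_ifs <;> omega)
          | (simp only [content4]; omega)
    · rw [entryCount_ge4 _ _ _ _ (LRTab_le3 m t s) (by omega),
        content4_ge4 _ _ _ _ (by omega)]
  · -- lattice
    intro r c e he
    rcases e with _ | _ | _ | e
    · omega
    · rw [prefixCount_eq _ _ _ r c _ 0 0 (m + t - max t 2) m (s + max t 2 - max s 2)
          (m + t - max t 2) (max s 2 - 2) (max t 2 - 2)
          (by simp only [colBound, part4]; omega) (by simp only [colBound, part4]; omega)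
          (by simp only [colBound, part4]; omega) (by simp only [colBound, part4]; omega)
          (by intro j hj; simp only [IsSkewCell, part4, LRTab]; split_ifs <;> omega)
          (by intro j hj; simp only [IsSkewCell, part4, LRTab]; split_ifs <;> omega)
          (by intro j hj; simp only [IsSkewCell, part4, LRTab]; split_ifs <;> omega)
          (by intro j hj; simp only [IsSkewCell, part4, LRTab]; split_ifs <;> omega),
        prefixCount_eq _ _ _ r c _ m (m + 2) t (m + t - max t 2) s (s + max t 2 - max s 2)
          0 (max s 2 - 2)
          (by simp only [colBound, part4]; omega) (by simp only [colBound, part4]; omega)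
          (by simp only [colBound, part4]; omega) (by simp only [colBound, part4]; omega)
          (by intro j hj; simp only [IsSkewCell, part4, LRTab]; split_ifs <;> omega)
          (by intro j hj; simp only [IsSkewCell, part4, LRTab]; split_ifs <;> omega)
          (by intro j hj; simp only [IsSkewCell, part4, LRTab]; split_ifs <;> omega)
          (by intro j hj; simp only [IsSkewCell, part4, LRTab]; split_ifs <;> omega)]
      split_ifs <;> omega
    · rw [prefixCount_eq _ _ _ r c _ 0 0 0 0 (m + t - max t 2) m (max t 2 - 2) (m - 2)
          (by simp only [colBound, part4]; omega) (by simp only [colBound, part4]; omega)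
          (by simp only [colBound, part4]; omega) (by simp only [colBound, part4]; omega)
          (by intro j hj; simp only [IsSkewCell, part4, LRTab]; split_ifs <;> omega)
          (by intro j hj; simp only [IsSkewCell, part4, LRTab]; split_ifs <;> omega)
          (by intro j hj; simp only [IsSkewCell, part4, LRTab]; split_ifs <;> omega)
          (by intro j hj; simp only [IsSkewCell, part4, LRTab]; split_ifs <;> omega),
        prefixCount_eq _ _ _ r c _ 0 0 (m + t - max t 2) m (s + max t 2 - max s 2)
          (m + t - max t 2) (max s 2 - 2) (max t 2 - 2)
          (by simp only [colBound, part4]; omega) (by simp only [colBound, part4]; omega)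
          (by simp only [colBound, part4]; omega) (by simp only [colBound, part4]; omega)
          (by intro j hj; simp only [IsSkewCell, part4, LRTab]; split_ifs <;> omega)
          (by intro j hj; simp only [IsSkewCell, part4, LRTab]; split_ifs <;> omega)
          (by intro j hj; simp only [IsSkewCell, part4, LRTab]; split_ifs <;> omega)
          (by intro j hj; simp only [IsSkewCell, part4, LRTab]; split_ifs <;> omega)]
      split_ifs <;> omega
    · rw [prefixCount_ge4 _ _ _ _ _ _ (LRTab_le3 m t s) (by omega)]
      omega

lemma nu_le_colBound (m : ℕ) : ∀ i, part4 (m + 2) m m (m - 2) i ≤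
    colBound (part4 (m + 2) m m (m - 2)) := by
  intro i
  rcases i with _ | _ | _ | _ | i <;> simp only [colBound, part4] <;> omega

lemma tab_bounded (m t s : ℕ) (T : ℕ → ℕ → ℕ)
    (hT : IsLRTableau (part4 (m + 2) m m (m - 2)) (part4 m t s 0)
      (content4 m (m - s) (m - t) 0) T) :
    ∀ i j, T i j ≤ 3 := by
  intro i j
  by_cases hc : IsSkewCell (part4 (m + 2) m m (m - 2)) (part4 m t s 0) i j
  · by_contra hgt
    push_neg at hgt
    have hi4 : i < 4 := by
      by_contra hge
      push_neg at hge
      have h0 : part4 (m + 2) m m (m - 2) i = 0 := by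
        rcases i with _ | _ | _ | _ | i <;> first | omega | rfl
      have := hc.2
      omega
    have hj : j < colBound (part4 (m + 2) m m (m - 2)) :=
      lt_of_lt_of_le hc.2 (nu_le_colBound m i)
    have hmem : (i, j) ∈ ((Finset.range 4 ×ˢ
        Finset.range (colBound (part4 (m + 2) m m (m - 2)))).filter
        (fun p => IsSkewCell (part4 (m + 2) m m (m - 2)) (part4 m t s 0) p.1 p.2 ∧
          T p.1 p.2 = T i j)) := by
      simp only [Finset.mem_filter, Finset.mem_product, Finset.mem_range]
      exact ⟨⟨hi4, hj⟩, hc, trivial⟩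
    have hne : entryCount (part4 (m + 2) m m (m - 2)) (part4 m t s 0) T (T i j) ≠ 0 :=
      Finset.card_ne_zero_of_mem hmem
    rw [hT.content _ (by omega), content4_ge4 _ _ _ _ (by omega)] at hne
    exact hne rfl
  · rw [hT.zero_off i j hc]
    omega


/-- For `m ≥ 2`, `m ≥ t ≥ s ≥ 0` with `m ≥ t + s`, `λ = (m, t, s, 0)` and
`μ = (m, m−s, m−t, 0)`, the Littlewood–Richardson coefficient
`c^{(m+2,m,m,m−2)}_{λ, μ}` is at least `1`. -/
theorem lrCoeff_nu_m2_pos (m t s : ℕ) (hm : 2 ≤ m) (hts : s ≤ t) (htm : t ≤ m)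
    (hsum : t + s ≤ m) :
    1 ≤ lrCoeff (part4 (m + 2) m m (m - 2)) (part4 m t s 0)
        (content4 m (m - s) (m - t) 0) := by
  haveI hfin : Finite {T : ℕ → ℕ → ℕ // IsLRTableau (part4 (m + 2) m m (m - 2))
      (part4 m t s 0) (content4 m (m - s) (m - t) 0) T} := by
    apply Finite.of_injective (β := Fin 4 → Fin (colBound (part4 (m + 2) m m (m - 2))) → Fin 4)
      (fun T i j => ⟨min (T.1 i j) 3, by omega⟩)
    intro T T' hEq
    apply Subtype.ext
    funext i j
    by_cases hc : IsSkewCell (part4 (m + 2) m m (m - 2)) (part4 m t s 0) i j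
    · have hi4 : i < 4 := by
        by_contra hge
        push_neg at hge
        have h0 : part4 (m + 2) m m (m - 2) i = 0 := by
          rcases i with _ | _ | _ | _ | i <;> first | omega | rfl
        have := hc.2
        omega
      have hj : j < colBound (part4 (m + 2) m m (m - 2)) :=
        lt_of_lt_of_le hc.2 (nu_le_colBound m i)
      have h1 := congrFun (congrFun hEq ⟨i, hi4⟩) ⟨j, hj⟩
      have h2 : min (T.1 i j) 3 = min (T'.1 i j) 3 := congrArg Fin.val h1
      have b1 := tab_bounded m t s T.1 T.2 i j
      have b2 := tab_bounded m t s T'.1 T'.2 i j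
      omega
    · rw [T.2.zero_off i j hc, T'.2.zero_off i j hc]
  haveI hne : Nonempty {T : ℕ → ℕ → ℕ // IsLRTableau (part4 (m + 2) m m (m - 2))
      (part4 m t s 0) (content4 m (m - s) (m - t) 0) T} :=
    ⟨⟨LRTab m t s, lrCoeff_nu_m2_pos' m t s hm hts htm hsum⟩⟩
  exact Nat.card_pos
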